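/- arXiv:0712.0241 — 8 statements merged into one kernel-verified Lean document; each statement's English description precedes it below -/
import Mathlib

section
/- Suppose for each β the momentum P_β(t) is differentiable and satisfies Ṗ_β = −Σ_k (P_β · u_k) ∇ψ_k(Q_β), and the Jacobian J_β(t) is differentiable and satisfies J̇_β v = Σ_k (∇ψ_k(Q_β) · (J_β v)) u_k for all v ∈ ℝ². Then for each β the quantity J_β(t)ᵀ P_β(t) is conserved: for every fixed v ∈ ℝ², the scalar function t ↦ P_β(t) · (J_β(t) v) is constant in time. -/
open scoped RealInnerProductSpace

/-!
The momentum evolves by minus the transpose of the rank-`n_g` operator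
`A w = ∑ k, ⟪∇ψ_k(Q), w⟫ • u_k` that drives the Jacobian, so the derivative
`⟪Ṗ, J v⟫ + ⟪P, J̇ v⟫ = -⟪Aᵀ P, J v⟫ + ⟪P, A (J v)⟫` of the pairing vanishes.
-/

section

variable {E ι : Type*} [NormedAddCommGroup E] [InnerProductSpace ℝ E] [Fintype ι]

theorem inner_sum_smul_eq_inner_sum_smul (p w : E) (g u : ι → E) :
    ⟪p, ∑ k, ⟪g k, w⟫ • u k⟫ = ⟪∑ k, ⟪p, u k⟫ • g k, w⟫ := by
  simp only [inner_sum, sum_inner, real_inner_smul_right, real_inner_smul_left]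
  exact Finset.sum_congr rfl fun k _ => mul_comm _ _

theorem hasDerivAt_inner_eq_zero_of_adjoint_flows {p w : ℝ → E} {g u : ι → ℝ → E} {t : ℝ}
    (hp : HasDerivAt p (-∑ k, ⟪p t, u k t⟫ • g k t) t)
    (hw : HasDerivAt w (∑ k, ⟪g k t, w t⟫ • u k t) t) :
    HasDerivAt (fun τ => ⟪p τ, w τ⟫) 0 t := by
  refine (hp.inner ℝ hw).congr_deriv ?_
  rw [inner_neg_left, inner_sum_smul_eq_inner_sum_smul, add_neg_cancel]

theorem inner_eq_inner_of_adjoint_flows {p w : ℝ → E} {g u : ι → ℝ → E}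
    (hp : ∀ t, HasDerivAt p (-∑ k, ⟪p t, u k t⟫ • g k t) t)
    (hw : ∀ t, HasDerivAt w (∑ k, ⟪g k t, w t⟫ • u k t) t) (t₁ t₂ : ℝ) :
    ⟪p t₁, w t₁⟫ = ⟪p t₂, w t₂⟫ :=
  have hderiv t := hasDerivAt_inner_eq_zero_of_adjoint_flows (hp t) (hw t)
  is_const_of_deriv_eq_zero (fun t => (hderiv t).differentiableAt) (fun t => (hderiv t).deriv) t₁ t₂

end

theorem variational_particle_mesh_momentum_conservation_general
    {np ng : ℕ}
    (ψ : Fin ng → EuclideanSpace ℝ (Fin 2) → ℝ)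
    (Q P : Fin np → ℝ → EuclideanSpace ℝ (Fin 2))
    (u : Fin ng → ℝ → EuclideanSpace ℝ (Fin 2))
    (J : Fin np → ℝ → (EuclideanSpace ℝ (Fin 2) →L[ℝ] EuclideanSpace ℝ (Fin 2)))
    (hP : ∀ β t,
      HasDerivAt (P β)
        (-∑ k, ⟪P β t, u k t⟫ • gradient (ψ k) (Q β t)) t)
    (hJ : ∀ β t (w : EuclideanSpace ℝ (Fin 2)),
      HasDerivAt (fun τ => J β τ w)
        (∑ k, ⟪gradient (ψ k) (Q β t), J β t w⟫ • u k t) t) :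
    ∀ (β : Fin np) (v : EuclideanSpace ℝ (Fin 2)) (t₁ t₂ : ℝ),
      ⟪P β t₁, J β t₁ v⟫ = ⟪P β t₂, J β t₂ v⟫ := fun β v =>
  inner_eq_inner_of_adjoint_flows (g := fun k t => gradient (ψ k) (Q β t))
    (hP β) (fun t => hJ β t v)

/-- If the momenta satisfy `Ṗ_β = −Σ_k (P_β · u_k) ∇ψ_k(Q_β)` and the Jacobians
satisfy `J̇_β v = Σ_k (∇ψ_k(Q_β) · (J_β v)) u_k`, then for each `β` the quantity `J_βᵀ P_β`
is conserved: for every fixed `v`, the scalar `t ↦ P_β(t) · (J_β(t) v)` is constant in time. -/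
theorem variational_particle_mesh_momentum_conservation
    {np ng : ℕ}
    (ψ : Fin ng → EuclideanSpace ℝ (Fin 2) → ℝ)
    (hψ : ∀ k, Differentiable ℝ (ψ k))
    (Q P : Fin np → ℝ → EuclideanSpace ℝ (Fin 2))
    (u : Fin ng → ℝ → EuclideanSpace ℝ (Fin 2))
    (J : Fin np → ℝ → (EuclideanSpace ℝ (Fin 2) →L[ℝ] EuclideanSpace ℝ (Fin 2)))
    (hP : ∀ β t,
      HasDerivAt (P β)
        (-∑ k, ⟪P β t, u k t⟫ • gradient (ψ k) (Q β t)) t)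
    (hJ : ∀ β t (w : EuclideanSpace ℝ (Fin 2)),
      HasDerivAt (fun τ => J β τ w)
        (∑ k, ⟪gradient (ψ k) (Q β t), J β t w⟫ • u k t) t) :
    ∀ (β : Fin np) (v : EuclideanSpace ℝ (Fin 2)) (t₁ t₂ : ℝ),
      ⟪P β t₁, J β t₁ v⟫ = ⟪P β t₂, J β t₂ v⟫ :=
  variational_particle_mesh_momentum_conservation_general ψ Q P u J hP hJ
end

section
/- Suppose for each β the momentum P_β(t) satisfies Ṗ_β = −Σ_k (P_β · u_k) ∇ψ_k(Q_β) and the Jacobian J_β(t) satisfies J̇_β v = Σ_k (∇ψ_k(Q_β) · (J_β v)) u_k for all v ∈ ℝ², with initial condition J_β(0) = Id. Let ΔQ_β ∈ ℝ² be vectors (approximating the tangent to the curve at the particles at time 0). If P_β(0) · ΔQ_β = 0 for every β (the momentum is initially normal to the curve), then P_β(t) · (J_β(t) ΔQ_β) = 0 for all t and all β (the momentum stays normal to the transported tangent vectors). -/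
open scoped RealInnerProductSpace BigOperators

/-- If the momenta and Jacobians satisfy the semi-discrete evolution equations,
`J_β(0) = Id`, and the momentum is initially normal to the curve (`P_β(0) · ΔQ_β = 0`),
then the momentum stays normal to the transported tangent vectors:
`P_β(t) · (J_β(t) ΔQ_β) = 0` for all `t` and `β`. -/
theorem variational_particle_mesh_momentum_stays_normal
    {np ng : ℕ}
    (ψ : Fin ng → EuclideanSpace ℝ (Fin 2) → ℝ)
    (hψ : ∀ k, Differentiable ℝ (ψ k))
    (Q P : Fin np → ℝ → EuclideanSpace ℝ (Fin 2))
    (u : Fin ng → ℝ → EuclideanSpace ℝ (Fin 2))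
    (J : Fin np → ℝ → (EuclideanSpace ℝ (Fin 2) →L[ℝ] EuclideanSpace ℝ (Fin 2)))
    (hP : ∀ β t,
      HasDerivAt (P β)
        (-∑ k, ⟪P β t, u k t⟫ • gradient (ψ k) (Q β t)) t)
    (hJ : ∀ β t (w : EuclideanSpace ℝ (Fin 2)),
      HasDerivAt (fun τ => J β τ w)
        (∑ k, ⟪gradient (ψ k) (Q β t), J β t w⟫ • u k t) t)
    (hJ0 : ∀ β, J β 0 = ContinuousLinearMap.id ℝ (EuclideanSpace ℝ (Fin 2)))
    (ΔQ : Fin np → EuclideanSpace ℝ (Fin 2))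
    (hP0 : ∀ β, ⟪P β 0, ΔQ β⟫ = 0) :
    ∀ (t : ℝ) (β : Fin np), ⟪P β t, J β t (ΔQ β)⟫ = 0 := by
  intro t β
  set f : ℝ → ℝ := fun τ => ⟪P β τ, J β τ (ΔQ β)⟫ with hf
  have hderiv : ∀ s : ℝ, HasDerivAt f 0 s := by
    intro s
    have h := (hP β s).inner ℝ (hJ β s (ΔQ β))
    have hval : ⟪(-∑ k, ⟪P β s, u k s⟫ • gradient (ψ k) (Q β s)), J β s (ΔQ β)⟫
        + ⟪P β s, ∑ k, ⟪gradient (ψ k) (Q β s), J β s (ΔQ β)⟫ • u k s⟫ = 0 := by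
      rw [inner_neg_left, inner_sum, sum_inner]
      simp only [inner_smul_left, inner_smul_right, RCLike.conj_to_real]
      rw [neg_add_eq_zero]
      refine Finset.sum_congr rfl fun k _ => ?_
      ring
    rw [add_comm] at h
    rw [hval] at h
    exact h
  have hconst : ∀ s : ℝ, f s = f 0 := by
    intro s
    exact is_const_of_deriv_eq_zero (fun x => (hderiv x).differentiableAt)
      (fun x => (hderiv x).deriv) s 0
  have := hconst t
  rw [hf] at this
  simp only at this
  rw [this, hJ0 β]
  simpa using hP0 β
end

section
/- Fix a timestep Δt > 0, a step n, a particle index β, mesh vectors u_k^{n+1} ∈ ℝ², a position Q_β^n ∈ ℝ², a momentum P_β^{n+1} ∈ ℝ², a linear map J_β^n : ℝ² → ℝ², and a vector v ∈ ℝ². Define J_β^{n+1} by J_β^{n+1} w = J_β^n w + Δt Σ_k (∇ψ_k(Q_β^n) · (J_β^n w)) u_k^{n+1} for all w, and define Q_β^{n+1} = Q_β^n + Δt Σ_k u_k^{n+1} ψ_k(Q_β^n). Then the derivative at ε = 0 of the map ε ↦ P_β^{n+1} · ( (Q_β^{n+1} + ε J_β^{n+1} v) − (Q_β^n + ε J_β^n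 v) − Δt Σ_k ψ_k(Q_β^n + ε J_β^n v) u_k^{n+1} ) equals 0; that is, the discrete transformation δQ_β^n = J_β^n v is a symmetry of each term of the discrete action. -/
open scoped RealInnerProductSpace BigOperators

/-! By the chain rule, `ε ↦ ψ_k(Q + ε J v)` has derivative `⟪∇ψ_k(Q), J v⟫` at `0`, so the
derivative of the force term `Δt Σ_k ψ_k(Q + ε J v) u_k` is exactly the `Δt`-part of the Jacobian
update. Every other term is affine in `ε`, and the derivatives cancel. -/

section

variable {E F : Type*} [NormedAddCommGroup E] [InnerProductSpace ℝ E]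
  [NormedAddCommGroup F] [NormedSpace ℝ F]

theorem HasGradientAt.hasDerivAt_add_smul [CompleteSpace E] {f : E → ℝ} {f' x : E}
    (hf : HasGradientAt f f' x) (w : E) : HasDerivAt (fun ε : ℝ => f (x + ε • w)) ⟪f', w⟫ 0 := by
  have hline : HasDerivAt (fun ε : ℝ => x + ε • w) w 0 := by
    simpa using ((hasDerivAt_id (0 : ℝ)).smul_const w).const_add x
  have hf0 : HasFDerivAt f (InnerProductSpace.toDual ℝ E f') (x + (0 : ℝ) • w) := by
    simpa using hf.hasFDerivAt
  simpa [Function.comp_def] using hf0.comp_hasDerivAt 0 hline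

theorem hasDerivAt_sum_apply_add_smul_smul [CompleteSpace E] {ι : Type*} (s : Finset ι)
    {ψ : ι → E → ℝ} {x : E} (hψ : ∀ k ∈ s, DifferentiableAt ℝ (ψ k) x) (w : E) (u : ι → F) :
    HasDerivAt (fun ε : ℝ => ∑ k ∈ s, ψ k (x + ε • w) • u k)
      (∑ k ∈ s, ⟪gradient (ψ k) x, w⟫ • u k) 0 :=
  HasDerivAt.fun_sum fun k hk =>
    ((hψ k hk).hasGradientAt.hasDerivAt_add_smul w).smul_const (u k)

theorem hasDerivAt_inner_sub_sub_eq_zero {g : ℝ → E} {S : E} (hg : HasDerivAt g S 0)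
    (P A B a : E) (c : ℝ) :
    HasDerivAt (fun ε : ℝ => ⟪P, (A + ε • (a + c • S)) - (B + ε • a) - c • g ε⟫) 0 0 := by
  have hvec : HasDerivAt (fun ε : ℝ => (A + ε • (a + c • S)) - (B + ε • a) - c • g ε) 0 0 := by
    have hlin : ∀ b : E, HasDerivAt (fun ε : ℝ => ε • b) b 0 := fun b => by
      simpa using (hasDerivAt_id (0 : ℝ)).smul_const b
    exact ((((hlin (a + c • S)).const_add A).sub ((hlin a).const_add B)).sub
      (hg.const_smul c)).congr_deriv (by abel)
  simpa [Function.comp_def] using (innerSL ℝ P).hasFDerivAt.comp_hasDerivAt 0 hvec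

end

theorem discrete_action_term_symmetry_general
    {ng : ℕ}
    (ψ : Fin ng → EuclideanSpace ℝ (Fin 2) → ℝ)
    (hψ : ∀ k, Differentiable ℝ (ψ k))
    (Δt : ℝ)
    (u : Fin ng → EuclideanSpace ℝ (Fin 2))
    (Qn Pn1 : EuclideanSpace ℝ (Fin 2))
    (Jn : EuclideanSpace ℝ (Fin 2) →L[ℝ] EuclideanSpace ℝ (Fin 2))
    (v : EuclideanSpace ℝ (Fin 2)) :
    HasDerivAt
      (fun ε : ℝ =>
        ⟪Pn1,
          ((Qn + Δt • ∑ k, ψ k Qn • u k)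
              + ε • (Jn v + Δt • ∑ k, ⟪gradient (ψ k) Qn, Jn v⟫ • u k))
            - (Qn + ε • Jn v)
            - Δt • ∑ k, ψ k (Qn + ε • Jn v) • u k⟫)
      0 0 :=
  hasDerivAt_inner_sub_sub_eq_zero
    (hasDerivAt_sum_apply_add_smul_smul Finset.univ (fun k _ => (hψ k) Qn) (Jn v) u)
    Pn1 _ Qn (Jn v) Δt

/-- The discrete transformation `δQ_β^n = J_β^n v` (with the discrete Jacobian
update `J_β^{n+1} w = J_β^n w + Δt Σ_k (∇ψ_k(Q_β^n) · (J_β^n w)) u_k^{n+1}` and the symplectic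
Euler position update `Q_β^{n+1} = Q_β^n + Δt Σ_k ψ_k(Q_β^n) u_k^{n+1}`) is a symmetry of each
term of the discrete action: the derivative at `ε = 0` of
`ε ↦ P_β^{n+1} · ((Q_β^{n+1} + ε J_β^{n+1} v) − (Q_β^n + ε J_β^n v) − Δt Σ_k ψ_k(Q_β^n + ε J_β^n v) u_k^{n+1})`
equals `0`. -/
theorem discrete_action_term_symmetry
    {ng : ℕ} (n : ℕ)
    (ψ : Fin ng → EuclideanSpace ℝ (Fin 2) → ℝ)
    (hψ : ∀ k, Differentiable ℝ (ψ k))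
    (Δt : ℝ) (hΔt : 0 < Δt)
    (u : Fin ng → EuclideanSpace ℝ (Fin 2))
    (Qn Pn1 : EuclideanSpace ℝ (Fin 2))
    (Jn : EuclideanSpace ℝ (Fin 2) →L[ℝ] EuclideanSpace ℝ (Fin 2))
    (v : EuclideanSpace ℝ (Fin 2)) :
    HasDerivAt
      (fun ε : ℝ =>
        ⟪Pn1,
          ((Qn + Δt • ∑ k, ψ k Qn • u k)
              + ε • (Jn v + Δt • ∑ k, ⟪gradient (ψ k) Qn, Jn v⟫ • u k))
            - (Qn + ε • Jn v)
            - Δt • ∑ k, ψ k (Qn + ε • Jn v) • u k⟫)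
      0 0 :=
  discrete_action_term_symmetry_general ψ hψ Δt u Qn Pn1 Jn v
end

section
/- Let sequences Q_β^n ∈ ℝ², P_β^n ∈ ℝ², mesh vectors u_k^n ∈ ℝ², and linear maps J_β^n : ℝ² → ℝ² satisfy, for all n and β: the discrete momentum update P_β^{n+1} = P_β^n − Δt Σ_k (P_β^{n+1} · u_k^{n+1}) ∇ψ_k(Q_β^n), and the discrete Jacobian update J_β^{n+1} w = J_β^n w + Δt Σ_k (∇ψ_k(Q_β^n) · (J_β^n w)) u_k^{n+1} for all w ∈ ℝ². Then the quantity (J_β^n)ᵀ P_β^n is conserved by the discrete evolution: for every n, β and every vector w ∈ ℝ², P_β^{n+1} · (J_β^{n+1} w) = P_β^n · (J_β^n w). -/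
open scoped RealInnerProductSpace BigOperators

lemma aux_conserve {E : Type*} [NormedAddCommGroup E] [InnerProductSpace ℝ E]
    {ng : ℕ} (Δt : ℝ) (p jw : E) (g v : Fin ng → E) :
    ⟪p, jw + Δt • ∑ k, ⟪g k, jw⟫ • v k⟫ = ⟪p + Δt • ∑ k, ⟪p, v k⟫ • g k, jw⟫ := by
  simp only [inner_add_right, inner_add_left, real_inner_smul_left, real_inner_smul_right,
    inner_sum, sum_inner]
  congr 1
  congr 1
  apply Finset.sum_congr rfl
  intro k _
  ring

/-- For the symplectic Euler discretisation, with momentum update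
`P_β^{n+1} = P_β^n − Δt Σ_k (P_β^{n+1} · u_k^{n+1}) ∇ψ_k(Q_β^n)` and Jacobian update
`J_β^{n+1} w = J_β^n w + Δt Σ_k (∇ψ_k(Q_β^n) · (J_β^n w)) u_k^{n+1}`, the quantity
`(J_β^n)ᵀ P_β^n` is conserved: `P_β^{n+1} · (J_β^{n+1} w) = P_β^n · (J_β^n w)` for all `n, β, w`. -/
theorem discrete_momentum_conservation
    {np ng : ℕ}
    (ψ : Fin ng → EuclideanSpace ℝ (Fin 2) → ℝ)
    (hψ : ∀ k, Differentiable ℝ (ψ k))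
    (Δt : ℝ)
    (Q P : ℕ → Fin np → EuclideanSpace ℝ (Fin 2))
    (u : ℕ → Fin ng → EuclideanSpace ℝ (Fin 2))
    (J : ℕ → Fin np → (EuclideanSpace ℝ (Fin 2) →L[ℝ] EuclideanSpace ℝ (Fin 2)))
    (hP : ∀ n β,
      P (n + 1) β
        = P n β - Δt • ∑ k, ⟪P (n + 1) β, u (n + 1) k⟫ • gradient (ψ k) (Q n β))
    (hJ : ∀ n β (w : EuclideanSpace ℝ (Fin 2)),
      J (n + 1) β w
        = J n β w + Δt • ∑ k, ⟪gradient (ψ k) (Q n β), J n β w⟫ • u (n + 1) k) :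
    ∀ (n : ℕ) (β : Fin np) (w : EuclideanSpace ℝ (Fin 2)),
      ⟪P (n + 1) β, J (n + 1) β w⟫ = ⟪P n β, J n β w⟫ := by
  intro n β w
  have hPn : P n β = P (n + 1) β + Δt • ∑ k, ⟪P (n + 1) β, u (n + 1) k⟫ • gradient (ψ k) (Q n β) :=
    (sub_eq_iff_eq_add.mp (hP n β).symm)
  rw [hJ n β w, hPn]
  exact aux_conserve Δt _ _ _ _
end

section
/- Let sequences Q_β^n ∈ ℝ², P_β^n ∈ ℝ², mesh vectors u_k^n ∈ ℝ², and linear maps J_β^n : ℝ² → ℝ² satisfy the discrete momentum update P_β^{n+1} = P_β^n − Δt Σ_k (P_β^{n+1} · u_k^{n+1}) ∇ψ_k(Q_β^n) and the discrete Jacobian update J_β^{n+1} w = J_β^n w + Δt Σ_k (∇ψ_k(Q_β^n) · (J_β^n w)) u_k^{n+1}, with J_β^0 = Id. Let ΔQ_β ∈ ℝ² be vectors with P_β^0 · ΔQ_β = 0 for every β. Then P_β^n · (J_β^n ΔQ_β) = 0 for all n and all β: the discretised momentum remains normal to the transported tangent vectors for all timesteps. -/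
open scoped RealInnerProductSpace BigOperators

/-- For the symplectic Euler discretisation with `J_β^0 = Id`, if the momentum
is initially normal to the curve (`P_β^0 · ΔQ_β = 0`), then the discretised momentum remains
normal to the transported tangent vectors for all timesteps:
`P_β^n · (J_β^n ΔQ_β) = 0` for all `n` and `β`. -/
theorem discrete_momentum_stays_normal
    {np ng : ℕ}
    (ψ : Fin ng → EuclideanSpace ℝ (Fin 2) → ℝ)
    (hψ : ∀ k, Differentiable ℝ (ψ k))
    (Δt : ℝ)
    (Q P : ℕ → Fin np → EuclideanSpace ℝ (Fin 2))
    (u : ℕ → Fin ng → EuclideanSpace ℝ (Fin 2))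
    (J : ℕ → Fin np → (EuclideanSpace ℝ (Fin 2) →L[ℝ] EuclideanSpace ℝ (Fin 2)))
    (hP : ∀ n β,
      P (n + 1) β
        = P n β - Δt • ∑ k, ⟪P (n + 1) β, u (n + 1) k⟫ • gradient (ψ k) (Q n β))
    (hJ : ∀ n β (w : EuclideanSpace ℝ (Fin 2)),
      J (n + 1) β w
        = J n β w + Δt • ∑ k, ⟪gradient (ψ k) (Q n β), J n β w⟫ • u (n + 1) k)
    (hJ0 : ∀ β, J 0 β = ContinuousLinearMap.id ℝ (EuclideanSpace ℝ (Fin 2)))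
    (ΔQ : Fin np → EuclideanSpace ℝ (Fin 2))
    (hP0 : ∀ β, ⟪P 0 β, ΔQ β⟫ = 0) :
    ∀ (n : ℕ) (β : Fin np), ⟪P n β, J n β (ΔQ β)⟫ = 0 := by
  intro n
  induction n with
  | zero =>
    intro β
    rw [hJ0]
    exact hP0 β
  | succ n ih =>
    intro β
    have key : ⟪P (n+1) β, J n β (ΔQ β)⟫
        = -Δt * ∑ k, ⟪P (n+1) β, u (n+1) k⟫ * ⟪gradient (ψ k) (Q n β), J n β (ΔQ β)⟫ := by
      have h := hP n β
      calc ⟪P (n+1) β, J n β (ΔQ β)⟫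
          = ⟪P n β - Δt • ∑ k, ⟪P (n + 1) β, u (n + 1) k⟫ • gradient (ψ k) (Q n β),
              J n β (ΔQ β)⟫ := by rw [← h]
        _ = ⟪P n β, J n β (ΔQ β)⟫
            - Δt * ∑ k, ⟪P (n+1) β, u (n+1) k⟫ * ⟪gradient (ψ k) (Q n β), J n β (ΔQ β)⟫ := by
            rw [inner_sub_left, real_inner_smul_left, sum_inner]
            simp only [real_inner_smul_left]
        _ = -Δt * ∑ k, ⟪P (n+1) β, u (n+1) k⟫ * ⟪gradient (ψ k) (Q n β), J n β (ΔQ β)⟫ := by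
            rw [ih β]
            ring
    rw [hJ n β (ΔQ β), inner_add_right, real_inner_smul_right, inner_sum]
    simp only [real_inner_smul_right]
    have hc : ∑ k, ⟪gradient (ψ k) (Q n β), J n β (ΔQ β)⟫ * ⟪P (n+1) β, u (n+1) k⟫
        = ∑ k, ⟪P (n+1) β, u (n+1) k⟫ * ⟪gradient (ψ k) (Q n β), J n β (ΔQ β)⟫ :=
      Finset.sum_congr rfl (fun k _ => mul_comm _ _)
    rw [key, hc]
    ring
end

section
/- Let u : ℝ × ℝ² → ℝ² be a C¹ time-dependent vector field, and let Q : ℝ × ℝ → ℝ² (arguments time t and curve parameter s) be C², and P : ℝ × ℝ → ℝ² be differentiable in t, satisfying ∂Q/∂t (t,s) = u(t, Q(t,s)) and ∂P/∂t (t,s) = −(D_x u(t, Q(t,s)))ᵀ P(t,s), where D_x u denotes the spatial derivative of u. Then for each fixed s, the scalar t ↦ P(t,s) · ∂Q/∂s (t,s) is constant in time; i.e. the momentum conjugate to the particle-relabelling symmetry, P · ∂Q/∂s, is conserved along solutions. -/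
open scoped RealInnerProductSpace

/-!
Write `W = ∂Q/∂s`. Differentiating `∂Q/∂t = u(t, Q)` in `s` and swapping the mixed partials of
the `C²` map `Q` gives the linearised flow `∂W/∂t = (D_x u) W`. Since `P` evolves by minus the
adjoint of the same operator, `∂ₜ⟪P, W⟫ = -⟪(D_x u)† P, W⟫ + ⟪P, (D_x u) W⟫ = 0`.
-/

section Slices

variable {𝕜 E : Type*} [NontriviallyNormedField 𝕜] [NormedAddCommGroup E] [NormedSpace 𝕜 E]
  {f : 𝕜 × 𝕜 → E} {f' : 𝕜 × 𝕜 →L[𝕜] E} {t s : 𝕜}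

theorem HasFDerivAt.hasDerivAt_fst_slice (h : HasFDerivAt f f' (t, s)) :
    HasDerivAt (fun τ => f (τ, s)) (f' (1, 0)) t :=
  h.comp_hasDerivAt t ((hasDerivAt_id t).prodMk (hasDerivAt_const t s))

theorem HasFDerivAt.hasDerivAt_snd_slice (h : HasFDerivAt f f' (t, s)) :
    HasDerivAt (fun σ => f (t, σ)) (f' (0, 1)) s :=
  h.comp_hasDerivAt s ((hasDerivAt_const s t).prodMk (hasDerivAt_id s))

end Slices

section MixedPartials

variable {E : Type*} [NormedAddCommGroup E] [NormedSpace ℝ E] {f : ℝ × ℝ → E} {t s : ℝ}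

theorem ContDiffAt.hasDerivAt_partial_snd_of_partial_fst (hf : ContDiffAt ℝ 2 f (t, s))
    {c : E} (hc : HasDerivAt (fun σ => fderiv ℝ f (t, σ) (1, 0)) c s) :
    HasDerivAt (fun τ => fderiv ℝ f (τ, s) (0, 1)) c t := by
  set D₂ := fderiv ℝ (fderiv ℝ f) (t, s)
  have hD₂ : HasFDerivAt (fderiv ℝ f) D₂ (t, s) :=
    ((hf.fderiv_right (m := 1) le_rfl).differentiableAt one_ne_zero).hasFDerivAt
  have hsymm : D₂ (1, 0) (0, 1) = D₂ (0, 1) (1, 0) :=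
    hf.isSymmSndFDerivAt (by simp [minSmoothness_of_isRCLikeNormedField]) _ _
  have hfst : HasDerivAt (fun τ => fderiv ℝ f (τ, s) (0, 1)) (D₂ (1, 0) (0, 1)) t := by
    simpa using hD₂.hasDerivAt_fst_slice.clm_apply (hasDerivAt_const t ((0, 1) : ℝ × ℝ))
  have hsnd : HasDerivAt (fun σ => fderiv ℝ f (t, σ) (1, 0)) (D₂ (0, 1) (1, 0)) s := by
    simpa using hD₂.hasDerivAt_snd_slice.clm_apply (hasDerivAt_const s ((1, 0) : ℝ × ℝ))
  rwa [hsymm, hsnd.unique hc] at hfst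

end MixedPartials

theorem ContDiff.hasDerivAt_partial_snd_of_flow {E : Type*} [NormedAddCommGroup E]
    [NormedSpace ℝ E] {u : ℝ × E → E} {Q : ℝ × ℝ → E} (hQ : ContDiff ℝ 2 Q) {t s : ℝ}
    (hflow : ∀ σ, HasDerivAt (fun τ => Q (τ, σ)) (u (t, Q (t, σ))) t)
    (hu : DifferentiableAt ℝ (fun x => u (t, x)) (Q (t, s))) :
    HasDerivAt (fun τ => fderiv ℝ Q (τ, s) (0, 1))
      (fderiv ℝ (fun x => u (t, x)) (Q (t, s)) (fderiv ℝ Q (t, s) (0, 1))) t := by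
  have hQd : Differentiable ℝ Q := hQ.differentiable two_ne_zero
  have hpartial_fst : (fun σ => fderiv ℝ Q (t, σ) (1, 0)) = fun σ => u (t, Q (t, σ)) :=
    funext fun σ => (hQd (t, σ)).hasFDerivAt.hasDerivAt_fst_slice.unique (hflow σ)
  refine hQ.contDiffAt.hasDerivAt_partial_snd_of_partial_fst ?_
  rw [hpartial_fst]
  exact hu.hasFDerivAt.comp_hasDerivAt s (hQd (t, s)).hasFDerivAt.hasDerivAt_snd_slice

theorem inner_eq_of_hasDerivAt_neg_adjoint {E : Type*} [NormedAddCommGroup E]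
    [InnerProductSpace ℝ E] [CompleteSpace E] {p w : ℝ → E} {A : ℝ → E →L[ℝ] E}
    (hp : ∀ t, HasDerivAt p (-(ContinuousLinearMap.adjoint (A t)) (p t)) t)
    (hw : ∀ t, HasDerivAt w (A t (w t)) t) (t₁ t₂ : ℝ) :
    ⟪p t₁, w t₁⟫ = ⟪p t₂, w t₂⟫ := by
  have hzero : ∀ t, HasDerivAt (fun t => ⟪p t, w t⟫) 0 t := by
    intro t
    have h := (hp t).inner ℝ (hw t)
    rwa [inner_neg_left, ContinuousLinearMap.adjoint_inner_left, add_neg_cancel] at h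
  exact is_const_of_deriv_eq_zero (fun t => (hzero t).differentiableAt)
    (fun t => (hzero t).deriv) t₁ t₂

/-- For a curve `Q(t,s)` embedded in the flow of a `C¹` time-dependent vector
field `u` (so `∂Q/∂t = u(t, Q)`), with momentum satisfying the adjoint equation
`∂P/∂t = −(D_x u(t, Q))ᵀ P`, the momentum conjugate to the particle-relabelling symmetry,
`P · ∂Q/∂s`, is conserved: for each fixed `s`, `t ↦ P(t,s) · ∂Q/∂s(t,s)` is constant. -/
theorem relabelling_momentum_conserved
    (u : ℝ × EuclideanSpace ℝ (Fin 2) → EuclideanSpace ℝ (Fin 2))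
    (hu : ContDiff ℝ 1 u)
    (Q : ℝ × ℝ → EuclideanSpace ℝ (Fin 2))
    (hQsmooth : ContDiff ℝ 2 Q)
    (P : ℝ × ℝ → EuclideanSpace ℝ (Fin 2))
    (hQ : ∀ (t s : ℝ),
      HasDerivAt (fun τ => Q (τ, s)) (u (t, Q (t, s))) t)
    (hP : ∀ (t s : ℝ),
      HasDerivAt (fun τ => P (τ, s))
        (-(ContinuousLinearMap.adjoint
            (fderiv ℝ (fun x => u (t, x)) (Q (t, s)))) (P (t, s))) t) :
    ∀ (s t₁ t₂ : ℝ),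
      ⟪P (t₁, s), deriv (fun σ => Q (t₁, σ)) s⟫
        = ⟪P (t₂, s), deriv (fun σ => Q (t₂, σ)) s⟫ := by
  intro s t₁ t₂
  have hpartial_snd : ∀ t, deriv (fun σ => Q (t, σ)) s = fderiv ℝ Q (t, s) (0, 1) := fun t =>
    ((hQsmooth.differentiable two_ne_zero _).hasFDerivAt.hasDerivAt_snd_slice).deriv
  rw [hpartial_snd, hpartial_snd]
  refine inner_eq_of_hasDerivAt_neg_adjoint (w := fun t => fderiv ℝ Q (t, s) (0, 1))
    (fun t => hP t s) (fun t => ?_) t₁ t₂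
  have hu_slice : ContDiff ℝ 1 (fun x => u (t, x)) := hu.comp (contDiff_const.prodMk contDiff_id)
  exact hQsmooth.hasDerivAt_partial_snd_of_flow (fun σ => hQ t σ)
    (hu_slice.differentiable one_ne_zero _)
end

section
/- The semi-discrete particle-mesh equations are canonically Hamiltonian with Hamiltonian H(Q,P) = ½⟨u(Q,P), A u(Q,P)⟩, where u(Q,P) = A⁻¹ m(Q,P) and m_k(Q,P) = Σ_β P_β ψ_k(Q_β). Precisely: H is differentiable in (Q,P), and for every β and every direction w ∈ ℝ², (i) the partial derivative of H with respect to P_β in direction w equals (Σ_k u_k(Q,P) ψ_k(Q_β)) · w, and (ii) the partial derivative of H with respect to Q_β in direction w equals Σ_k (P_β · u_k(Q,P)) (∇ψ_k(Q_β) · w). Consequently Hamilton's equations Q̇_β = ∂H/∂P_β, Ṗ_β = −∂H/∂Q_β coincide with the semi-discrete equations Q̇_β = Σ_k u_k ψ_k(Q_β) and Ṗ_β = −Σ_k (P_β · u_k) ∇ψ_k(Q_β). -/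
open scoped RealInnerProductSpace BigOperators

/-!
Write `m = m(Q,P)` and `S = A⁻¹`, so that `u = S m` and `H = ½ ⟨S m, m⟩`. The symmetry of `A`
passes to `S`, so along any curve the derivative of `H` is `⟨S m, ṁ⟩ = ⟨u, ṁ⟩`. The momentum map
is linear in `P` and depends on `Q` only through `ψ_k(Q_β)`, so along the coordinate curves
`P_β + ε w` and `Q_β + ε w` its derivative is `ψ_k(Q_β) w` and `(∇ψ_k(Q_β) · w) P_β`
respectively; pairing with `u` gives the two formulas.
-/

section SymmetricForm

variable {ι E : Type*} [Fintype ι] [NormedAddCommGroup E] [InnerProductSpace ℝ E]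

theorem sum_inner_symm_apply_comm (e : (ι → E) ≃ₗ[ℝ] (ι → E))
    (he : ∀ x y, ∑ k, ⟪e x k, y k⟫ = ∑ k, ⟪x k, e y k⟫) (x y : ι → E) :
    ∑ k, ⟪e.symm x k, y k⟫ = ∑ k, ⟪x k, e.symm y k⟫ := by
  simpa using (he (e.symm x) (e.symm y)).symm

theorem hasDerivAt_half_sum_inner_apply_self (S : (ι → E) →L[ℝ] (ι → E))
    (hS : ∀ x y, ∑ k, ⟪S x k, y k⟫ = ∑ k, ⟪x k, S y k⟫)
    {m : ℝ → ι → E} {m' : ι → E} {t : ℝ} (hm : HasDerivAt m m' t) :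
    HasDerivAt (fun ε => 1 / 2 * ∑ k, ⟪S (m ε) k, m ε k⟫) (∑ k, ⟪S (m t) k, m' k⟫) t := by
  have hSm : HasDerivAt (fun ε => S (m ε)) (S m') t := S.hasFDerivAt.comp_hasDerivAt t hm
  refine ((HasDerivAt.fun_sum fun k _ =>
    (hasDerivAt_pi.1 hSm k).inner ℝ (hasDerivAt_pi.1 hm k)).const_mul (1 / 2)).congr_deriv ?_
  rw [Finset.sum_add_distrib, hS m' (m t)]
  simp only [real_inner_comm (m' _)]
  ring

theorem Differentiable.half_sum_inner_apply_self {Y : Type*} [NormedAddCommGroup Y]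
    [NormedSpace ℝ Y] (S : (ι → E) →L[ℝ] (ι → E)) {m : Y → ι → E} (hm : Differentiable ℝ m) :
    Differentiable ℝ (fun y => 1 / 2 * ∑ k, ⟪S (m y) k, m y k⟫) :=
  (Differentiable.fun_sum fun k _ => (differentiable_pi.1 (S.differentiable.comp hm) k).inner ℝ
    (differentiable_pi.1 hm k)).const_mul _

end SymmetricForm

theorem hasDerivAt_update_add_smul {J F : Type*} [Fintype J] [DecidableEq J]
    [NormedAddCommGroup F] [NormedSpace ℝ F] (x : J → F) (β : J) (w : F) (t : ℝ) :
    HasDerivAt (fun ε : ℝ => Function.update x β (x β + ε • w)) (Pi.single β w : J → F) t := by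
  have hline : (fun ε : ℝ => Function.update x β (x β + ε • w)) =
      fun ε => x + ε • (Pi.single β w : J → F) := by
    funext ε
    rw [Pi.update_eq_sub_add_single, Pi.single_add, Pi.single_smul']
    abel
  rw [hline]
  simpa using ((hasDerivAt_id t).smul_const (Pi.single β w)).const_add x

section MomentumMap

variable {ι J X E : Type*} [Fintype J] [NormedAddCommGroup E] [NormedSpace ℝ E]

noncomputable def momentumMap (ψ : ι → X → ℝ) (Q : J → X) (P : J → E) : ι → E :=
  fun k => ∑ β, ψ k (Q β) • P β

theorem hasDerivAt_momentumMap_right (ψ : ι → X → ℝ) (Q : J → X) {P : ℝ → J → E} {P' : J → E}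
    {t : ℝ} (hP : HasDerivAt P P' t) :
    HasDerivAt (fun ε => momentumMap ψ Q (P ε)) (momentumMap ψ Q P') t :=
  hasDerivAt_pi.2 fun _ => HasDerivAt.fun_sum fun β _ => (hasDerivAt_pi.1 hP β).const_smul _

theorem hasDerivAt_momentumMap_update_momentum [DecidableEq J] (ψ : ι → X → ℝ) (Q : J → X)
    (P : J → E) (β : J) (w : E) :
    HasDerivAt (fun ε : ℝ => momentumMap ψ Q (Function.update P β (P β + ε • w)))
      (fun k => ψ k (Q β) • w) 0 := by
  convert hasDerivAt_momentumMap_right ψ Q (hasDerivAt_update_add_smul P β w 0) using 1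
  funext k
  simp [momentumMap, Pi.single_apply]

variable [NormedAddCommGroup X] [NormedSpace ℝ X]

theorem differentiable_momentumMap {ψ : ι → X → ℝ} (hψ : ∀ k, Differentiable ℝ (ψ k)) :
    Differentiable ℝ (fun QP : (J → X) × (J → E) => momentumMap ψ QP.1 QP.2) := by
  unfold momentumMap
  fun_prop

theorem hasDerivAt_momentumMap_left {ψ : ι → X → ℝ} {Q : ℝ → J → X} {Q' : J → X} (P : J → E)
    {t : ℝ} (hψ : ∀ k β, DifferentiableAt ℝ (ψ k) (Q t β)) (hQ : HasDerivAt Q Q' t) :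
    HasDerivAt (fun ε => momentumMap ψ (Q ε) P)
      (fun k => ∑ β, fderiv ℝ (ψ k) (Q t β) (Q' β) • P β) t :=
  hasDerivAt_pi.2 fun k => HasDerivAt.fun_sum fun β _ =>
    ((hψ k β).hasFDerivAt.comp_hasDerivAt t (hasDerivAt_pi.1 hQ β)).smul_const (P β)

theorem hasDerivAt_momentumMap_update_position [DecidableEq J] {ψ : ι → X → ℝ}
    (hψ : ∀ k, Differentiable ℝ (ψ k)) (Q : J → X) (P : J → E) (β : J) (w : X) :
    HasDerivAt (fun ε : ℝ => momentumMap ψ (Function.update Q β (Q β + ε • w)) P)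
      (fun k => fderiv ℝ (ψ k) (Q β) w • P β) 0 := by
  convert hasDerivAt_momentumMap_left P (fun k _ => (hψ k).differentiableAt)
    (hasDerivAt_update_add_smul Q β w 0) using 1
  funext k
  rw [Finset.sum_eq_single β (fun _ _ hne => by simp [hne]) (by simp)]
  simp

end MomentumMap

theorem semidiscrete_equations_are_hamiltonian_general
    {np ng : ℕ}
    (ψ : Fin ng → EuclideanSpace ℝ (Fin 2) → ℝ)
    (hψ : ∀ k, Differentiable ℝ (ψ k))
    (A : (Fin ng → EuclideanSpace ℝ (Fin 2)) →ₗ[ℝ] (Fin ng → EuclideanSpace ℝ (Fin 2)))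
    (hAsymm : ∀ x y, ∑ k, ⟪A x k, y k⟫ = ∑ k, ⟪x k, A y k⟫)
    (hAinv : Function.Bijective A)
    (uQP : (Fin np → EuclideanSpace ℝ (Fin 2)) → (Fin np → EuclideanSpace ℝ (Fin 2)) →
      (Fin ng → EuclideanSpace ℝ (Fin 2)))
    (huQP : ∀ Q P, A (uQP Q P) = fun k => ∑ β, ψ k (Q β) • P β)
    (H : (Fin np → EuclideanSpace ℝ (Fin 2)) → (Fin np → EuclideanSpace ℝ (Fin 2)) → ℝ)
    (hH : ∀ Q P, H Q P = (1 / 2) * ∑ k, ⟪uQP Q P k, A (uQP Q P) k⟫) :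
    Differentiable ℝ
        (fun QP : (Fin np → EuclideanSpace ℝ (Fin 2)) × (Fin np → EuclideanSpace ℝ (Fin 2)) =>
          H QP.1 QP.2)
      ∧ (∀ Q P (β : Fin np) (w : EuclideanSpace ℝ (Fin 2)),
          HasDerivAt (fun ε : ℝ => H Q (Function.update P β (P β + ε • w)))
            ⟪∑ k, ψ k (Q β) • uQP Q P k, w⟫ 0)
      ∧ (∀ Q P (β : Fin np) (w : EuclideanSpace ℝ (Fin 2)),
          HasDerivAt (fun ε : ℝ => H (Function.update Q β (Q β + ε • w)) P)
            (∑ k, ⟪P β, uQP Q P k⟫ * ⟪gradient (ψ k) (Q β), w⟫) 0) := by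
  let e := LinearEquiv.ofBijective A hAinv
  let S := LinearMap.toContinuousLinearMap e.symm.toLinearMap
  have hS := sum_inner_symm_apply_comm e hAsymm
  have hu : ∀ Q P, uQP Q P = S (momentumMap ψ Q P) := fun Q P => e.eq_symm_apply.2 (huQP Q P)
  have hHS : ∀ Q P, H Q P = 1 / 2 * ∑ k, ⟪S (momentumMap ψ Q P) k, momentumMap ψ Q P k⟫ := by
    intro Q P
    rw [hH, hu, show A (S _) = _ from e.apply_symm_apply _]
  simp only [hHS]
  refine ⟨(differentiable_momentumMap hψ).half_sum_inner_apply_self S, fun Q P β w => ?_,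
    fun Q P β w => ?_⟩
  · refine (hasDerivAt_half_sum_inner_apply_self S hS
      (hasDerivAt_momentumMap_update_momentum ψ Q P β w)).congr_deriv ?_
    simp [hu, sum_inner, real_inner_smul_left, real_inner_smul_right, real_inner_comm]
  · refine (hasDerivAt_half_sum_inner_apply_self S hS
      (hasDerivAt_momentumMap_update_position hψ Q P β w)).congr_deriv ?_
    simp [hu, real_inner_smul_left, real_inner_comm, mul_comm]

/-- The semi-discrete particle-mesh equations are canonically Hamiltonian with
Hamiltonian `H(Q,P) = ½⟨u(Q,P), A u(Q,P)⟩`, where `u(Q,P) = A⁻¹ m(Q,P)` and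
`m_k(Q,P) = Σ_β P_β ψ_k(Q_β)`.  Precisely: `H` is differentiable in `(Q,P)`, the partial
derivative of `H` with respect to `P_β` in direction `w` equals `(Σ_k u_k ψ_k(Q_β)) · w`,
and the partial derivative of `H` with respect to `Q_β` in direction `w` equals
`Σ_k (P_β · u_k) (∇ψ_k(Q_β) · w)`; hence Hamilton's equations `Q̇_β = ∂H/∂P_β`,
`Ṗ_β = −∂H/∂Q_β` coincide with the semi-discrete equations. -/
theorem semidiscrete_equations_are_hamiltonian
    {np ng : ℕ}
    (ψ : Fin ng → EuclideanSpace ℝ (Fin 2) → ℝ)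
    (hψ : ∀ k, Differentiable ℝ (ψ k))
    (A : (Fin ng → EuclideanSpace ℝ (Fin 2)) →ₗ[ℝ] (Fin ng → EuclideanSpace ℝ (Fin 2)))
    (hAsymm : ∀ x y, ∑ k, ⟪A x k, y k⟫ = ∑ k, ⟪x k, A y k⟫)
    (hApos : ∀ x, x ≠ 0 → 0 < ∑ k, ⟪A x k, x k⟫)
    (hAinv : Function.Bijective A)
    (uQP : (Fin np → EuclideanSpace ℝ (Fin 2)) → (Fin np → EuclideanSpace ℝ (Fin 2)) →
      (Fin ng → EuclideanSpace ℝ (Fin 2)))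
    (huQP : ∀ Q P, A (uQP Q P) = fun k => ∑ β, ψ k (Q β) • P β)
    (H : (Fin np → EuclideanSpace ℝ (Fin 2)) → (Fin np → EuclideanSpace ℝ (Fin 2)) → ℝ)
    (hH : ∀ Q P, H Q P = (1 / 2) * ∑ k, ⟪uQP Q P k, A (uQP Q P) k⟫) :
    Differentiable ℝ
        (fun QP : (Fin np → EuclideanSpace ℝ (Fin 2)) × (Fin np → EuclideanSpace ℝ (Fin 2)) =>
          H QP.1 QP.2)
      ∧ (∀ Q P (β : Fin np) (w : EuclideanSpace ℝ (Fin 2)),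
          HasDerivAt (fun ε : ℝ => H Q (Function.update P β (P β + ε • w)))
            ⟪∑ k, ψ k (Q β) • uQP Q P k, w⟫ 0)
      ∧ (∀ Q P (β : Fin np) (w : EuclideanSpace ℝ (Fin 2)),
          HasDerivAt (fun ε : ℝ => H (Function.update Q β (Q β + ε • w)) P)
            (∑ k, ⟪P β, uQP Q P k⟫ * ⟪gradient (ψ k) (Q β), w⟫) 0) :=
  semidiscrete_equations_are_hamiltonian_general ψ hψ A hAsymm hAinv uQP huQP H hH
end

section
/- Let (Q_β(t), P_β(t)) be a C¹ solution of the semi-discrete equations Q̇_β = Σ_k u_k ψ_k(Q_β), Ṗ_β = −Σ_k (P_β · u_k) ∇ψ_k(Q_β), where at each time the mesh vectors are determined by the momentum-map relation u(t) = A⁻¹ m(Q(t),P(t)) with m_k = Σ_β P_β ψ_k(Q_β) and A a symmetric, positive-definite, invertible operator on (ℝ²)^{n_g}. Then the discrete energy, half the squared discrete norm of the velocity, ½⟨u(t), A u(t)⟩, is constant in time. -/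
open scoped RealInnerProductSpace BigOperators

/-!
Write `m = A u` for the momentum map, so that the energy is `½⟨u, m⟩`. Since `A` is symmetric,
`d/dt ⟨u, A u⟩ = 2⟨u, ṁ⟩`. Differentiating `m_k = Σ_β ψ_k(Q_β) P_β` and inserting the equations
of motion, `⟨u, ṁ⟩` splits into `Σ_β ⟨Q̇_β, Ṗ_β⟩` and `Σ_{k,β} ⟨∇ψ_k(Q_β), Q̇_β⟩ ⟨u_k, P_β⟩`,
and the equation for `Ṗ_β` makes the first term exactly the negative of the second.
-/

namespace ParticleMesh

variable {ι κ F : Type*} [NormedAddCommGroup F] [InnerProductSpace ℝ F]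

/-- The natural inner product on `ι → F` (the Pi type itself only carries the sup norm). -/
def piInner [Fintype ι] (x y : ι → F) : ℝ := ∑ k, ⟪x k, y k⟫

def momentumMap [Fintype κ] (ψ : ι → F → ℝ) (Q P : κ → F) : ι → F :=
  fun k => ∑ β, ψ k (Q β) • P β

noncomputable def momentumMapDeriv [Fintype κ] [CompleteSpace F] (ψ : ι → F → ℝ)
    (Q P Q' P' : κ → F) : ι → F :=
  fun k => ∑ β, (ψ k (Q β) • P' β + ⟪gradient (ψ k) (Q β), Q' β⟫ • P β)

lemma piInner_comm [Fintype ι] (x y : ι → F) : piInner x y = piInner y x := by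
  simp only [piInner, real_inner_comm]

lemma hasDerivAt_piInner [Fintype ι] {x y : ℝ → ι → F} {x' y' : ι → F} {t : ℝ}
    (hx : HasDerivAt x x' t) (hy : HasDerivAt y y' t) :
    HasDerivAt (fun s => piInner (x s) (y s)) (piInner (x t) y' + piInner x' (y t)) t := by
  have h := HasDerivAt.fun_sum (u := Finset.univ) fun k _ =>
    (hasDerivAt_pi.mp hx k).inner ℝ (hasDerivAt_pi.mp hy k)
  simpa only [piInner, Finset.sum_add_distrib] using h

lemma hasDerivAt_piInner_self_of_symm [Fintype ι] [FiniteDimensional ℝ F]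
    {A : (ι → F) →ₗ[ℝ] (ι → F)} (hAsymm : ∀ x y, piInner (A x) y = piInner x (A y))
    (hAinv : Function.Bijective A) {u m : ℝ → ι → F} (hu : ∀ s, A (u s) = m s)
    {m' : ι → F} {t : ℝ} (hm : HasDerivAt m m' t) :
    HasDerivAt (fun s => piInner (u s) (A (u s))) (2 * piInner (u t) m') t := by
  let L := (LinearEquiv.ofBijective A hAinv).toContinuousLinearEquiv
  have hL : ∀ x, L x = A x := fun _ => rfl
  have hu_eq : u = fun s => L.symm (m s) := by
    funext s
    rw [← hu s, ← hL, ContinuousLinearEquiv.symm_apply_apply]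
  have hu' : HasDerivAt u (L.symm m') t := by
    rw [hu_eq]
    exact L.symm.hasFDerivAt.comp_hasDerivAt t hm
  have hsymm : piInner (L.symm m') (A (u t)) = piInner (u t) m' := by
    rw [← hAsymm, ← hL (L.symm m'), L.apply_symm_apply, piInner_comm]
  have hAu : HasDerivAt (fun s => A (u s)) m' t := by simpa only [hu] using hm
  convert hasDerivAt_piInner hu' hAu using 1
  rw [hsymm]
  ring

lemma hasDerivAt_comp_inner_gradient [CompleteSpace F] {f : F → ℝ} {γ : ℝ → F} {γ' : F}
    {t : ℝ} (hf : DifferentiableAt ℝ f (γ t)) (hγ : HasDerivAt γ γ' t) :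
    HasDerivAt (fun s => f (γ s)) ⟪gradient f (γ t), γ'⟫ t := by
  rw [inner_gradient_left]
  exact hf.hasFDerivAt.comp_hasDerivAt t hγ

lemma hasDerivAt_momentumMap [Fintype κ] [CompleteSpace F] {ψ : ι → F → ℝ} {Q P : κ → ℝ → F}
    {Q' P' : κ → F} {t : ℝ} (hψ : ∀ k β, DifferentiableAt ℝ (ψ k) (Q β t))
    (hQ : ∀ β, HasDerivAt (Q β) (Q' β) t) (hP : ∀ β, HasDerivAt (P β) (P' β) t) :
    HasDerivAt (fun s => momentumMap ψ (Q · s) (P · s))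
      (momentumMapDeriv ψ (Q · t) (P · t) Q' P') t := by
  refine hasDerivAt_pi.mpr fun k => HasDerivAt.fun_sum fun β _ => ?_
  exact (hasDerivAt_comp_inner_gradient (hψ k β) (hQ β)).smul (hP β)

lemma piInner_momentumMapDeriv_eq_zero [Fintype ι] [Fintype κ] [CompleteSpace F]
    (ψ : ι → F → ℝ) (u : ι → F) (Q P : κ → F) :
    piInner u (momentumMapDeriv ψ Q P (fun β => ∑ k, ψ k (Q β) • u k)
      (fun β => -∑ k, ⟪P β, u k⟫ • gradient (ψ k) (Q β))) = 0 := by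
  set q := fun β => ∑ k, ψ k (Q β) • u k
  set p := fun β => -∑ k, ⟪P β, u k⟫ • gradient (ψ k) (Q β)
  have hqp : ∀ β, ⟪q β, p β⟫ = -∑ k, ⟪gradient (ψ k) (Q β), q β⟫ * ⟪u k, P β⟫ := fun β => by
    simp only [p, inner_neg_right, inner_sum, real_inner_smul_right, real_inner_comm (q β),
      real_inner_comm (P β), mul_comm]
  calc piInner u (momentumMapDeriv ψ Q P q p)
      = ∑ β, (⟪q β, p β⟫ + ∑ k, ⟪gradient (ψ k) (Q β), q β⟫ * ⟪u k, P β⟫) := by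
        simp only [piInner, momentumMapDeriv, inner_sum, inner_add_right, real_inner_smul_right,
          Finset.sum_add_distrib]
        rw [Finset.sum_comm, Finset.sum_comm (s := Finset.univ (α := ι))]
        simp only [q, sum_inner, real_inner_smul_left]
    _ = 0 := by simp only [hqp, neg_add_cancel, Finset.sum_const_zero]

end ParticleMesh

open ParticleMesh

theorem semidiscrete_energy_conservation_general
    {np ng : ℕ}
    (ψ : Fin ng → EuclideanSpace ℝ (Fin 2) → ℝ)
    (hψ : ∀ k, Differentiable ℝ (ψ k))
    (A : (Fin ng → EuclideanSpace ℝ (Fin 2)) →ₗ[ℝ] (Fin ng → EuclideanSpace ℝ (Fin 2)))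
    (hAsymm : ∀ x y, ∑ k, ⟪A x k, y k⟫ = ∑ k, ⟪x k, A y k⟫)
    (hAinv : Function.Bijective A)
    (Q P : Fin np → ℝ → EuclideanSpace ℝ (Fin 2))
    (u : ℝ → Fin ng → EuclideanSpace ℝ (Fin 2))
    (hu : ∀ t, A (u t) = fun k => ∑ β, ψ k (Q β t) • P β t)
    (hQ : ∀ β t, HasDerivAt (Q β) (∑ k, ψ k (Q β t) • u t k) t)
    (hP : ∀ β t,
      HasDerivAt (P β) (-∑ k, ⟪P β t, u t k⟫ • gradient (ψ k) (Q β t)) t) :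
    ∀ t₁ t₂ : ℝ,
      (1 / 2) * ∑ k, ⟪u t₁ k, A (u t₁) k⟫
        = (1 / 2) * ∑ k, ⟪u t₂ k, A (u t₂) k⟫ := by
  have hE : ∀ t, HasDerivAt (fun s => piInner (u s) (A (u s))) 0 t := fun t => by
    have hm := hasDerivAt_momentumMap (fun k β => (hψ k).differentiableAt) (hQ · t) (hP · t)
    simpa only [piInner_momentumMapDeriv_eq_zero, mul_zero] using
      hasDerivAt_piInner_self_of_symm hAsymm hAinv hu hm
  intro t₁ t₂
  have hconst := is_const_of_deriv_eq_zero (fun t => (hE t).differentiableAt)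
    (fun t => (hE t).deriv) t₁ t₂
  exact congrArg (1 / 2 * ·) hconst

/-- Along any `C¹` solution of the semi-discrete equations
`Q̇_β = Σ_k u_k ψ_k(Q_β)`, `Ṗ_β = −Σ_k (P_β · u_k) ∇ψ_k(Q_β)`, with the mesh vectors
determined by the momentum-map relation `A u = m(Q,P)`, `m_k = Σ_β P_β ψ_k(Q_β)`,
`A` symmetric positive-definite and invertible, the discrete energy `½⟨u, A u⟩`
is constant in time. -/
theorem semidiscrete_energy_conservation
    {np ng : ℕ}
    (ψ : Fin ng → EuclideanSpace ℝ (Fin 2) → ℝ)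
    (hψ : ∀ k, Differentiable ℝ (ψ k))
    (A : (Fin ng → EuclideanSpace ℝ (Fin 2)) →ₗ[ℝ] (Fin ng → EuclideanSpace ℝ (Fin 2)))
    (hAsymm : ∀ x y, ∑ k, ⟪A x k, y k⟫ = ∑ k, ⟪x k, A y k⟫)
    (hApos : ∀ x, x ≠ 0 → 0 < ∑ k, ⟪A x k, x k⟫)
    (hAinv : Function.Bijective A)
    (Q P : Fin np → ℝ → EuclideanSpace ℝ (Fin 2))
    (u : ℝ → Fin ng → EuclideanSpace ℝ (Fin 2))
    (hu : ∀ t, A (u t) = fun k => ∑ β, ψ k (Q β t) • P β t)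
    (hQ : ∀ β t, HasDerivAt (Q β) (∑ k, ψ k (Q β t) • u t k) t)
    (hP : ∀ β t,
      HasDerivAt (P β) (-∑ k, ⟪P β t, u t k⟫ • gradient (ψ k) (Q β t)) t) :
    ∀ t₁ t₂ : ℝ,
      (1 / 2) * ∑ k, ⟪u t₁ k, A (u t₁) k⟫
        = (1 / 2) * ∑ k, ⟪u t₂ k, A (u t₂) k⟫ :=
  semidiscrete_energy_conservation_general ψ hψ A hAsymm hAinv Q P u hu hQ hP
end
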